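/- arXiv:2602.19078 — 3 statements merged into one kernel-verified Lean document; each statement's English description precedes it below -/
import Mathlib

section
/- Uniform lower bound for quadratic forms over a compact family of linear constraints: Let K be a nonempty compact topological space, let σ : K → Hom_ℂ(ℂ^J, ℂ^I) be continuous (equivalently, a continuous family of I×J complex matrices), and let q : K → (sesquilinear forms on ℂ^J, linear in the first argument and conjugate-linear in the second) be continuous. Assume that for every k ∈ K and every v ∈ ℂ^J with σ(k)v = 0 one has Re q(k)(v,v) ≥ 0. Then for every δ > 0 there exists a constant C > 0 such that for all k ∈ K and all v ∈ ℂ^J: Re q(k)(v,v) ≥ −δ |v|² − C |σ(k)v|², where |·| denotes the Euclidean (Hermitian) norm on ℂ^J and ℂ^I. -/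
/-!
On the compact set `K × S`, with `S` the unit sphere, `Re q(k)(u,u) + δ` is positive wherever
`σ(k)u = 0`, so the open sets `{Re q(k)(u,u) + δ + (n + 1)|σ(k)u|² > 0}` increase and cover it,
and one of them already does. Both sides of the inequality are homogeneous of degree two in `v`,
so the bound on the sphere gives it everywhere.
-/

open Filter Topology

theorem Continuous.semilinear_clm_apply {𝕜 𝕜₂ X E F : Type*} [NontriviallyNormedField 𝕜]
    [NontriviallyNormedField 𝕜₂] {τ : 𝕜 →+* 𝕜₂} [RingHomIsometric τ] [TopologicalSpace X]
    [SeminormedAddCommGroup E] [NormedSpace 𝕜 E] [SeminormedAddCommGroup F] [NormedSpace 𝕜₂ F]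
    {f : X → E →SL[τ] F} {g : X → E} (hf : Continuous f) (hg : Continuous g) :
    Continuous fun x ↦ f x (g x) := by
  refine continuous_iff_continuousAt.2 fun x₀ ↦ ?_
  have hsmall : Tendsto (fun x ↦ (f x - f x₀) (g x)) (𝓝 x₀) (𝓝 0) :=
    squeeze_zero_norm (fun x ↦ (f x - f x₀).le_opNorm (g x))
      (((hf.sub (continuous_const (y := f x₀))).norm.mul hg.norm).tendsto' x₀ 0 (by simp))
  simpa [ContinuousAt] using hsmall.add (((f x₀).continuous.comp hg).tendsto x₀)

theorem IsCompact.exists_pos_forall_pos_add_mul {X : Type*} [TopologicalSpace X] {s : Set X}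
    (hs : IsCompact s) {f g : X → ℝ} (hf : Continuous f) (hg : Continuous g)
    (hg_nonneg : ∀ x, 0 ≤ g x) (hfg : ∀ x ∈ s, g x = 0 → 0 < f x) :
    ∃ C : ℝ, 0 < C ∧ ∀ x ∈ s, 0 < f x + C * g x := by
  let U : ℕ → Set X := fun n ↦ {x | 0 < f x + (n + 1) * g x}
  have hU_mono : Monotone U := by
    intro m n hmn x hx
    simp only [U, Set.mem_ofPred_eq] at hx ⊢
    have : (m : ℝ) ≤ n := by exact_mod_cast hmn
    nlinarith [hg_nonneg x]
  have hU_cover : s ⊆ ⋃ n, U n := by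
    intro x hx
    rcases (hg_nonneg x).eq_or_lt with hgx | hgx
    · exact Set.mem_iUnion.2 ⟨0, by simp [U, ← hgx, hfg x hx hgx.symm]⟩
    · obtain ⟨n, hn⟩ := exists_nat_gt (-f x / g x)
      refine Set.mem_iUnion.2 ⟨n, ?_⟩
      have := (div_lt_iff₀ hgx).1 hn
      simp only [U, Set.mem_ofPred_eq]
      nlinarith
  obtain ⟨n, hn⟩ := hs.elim_directed_cover U
    (fun n ↦ isOpen_lt continuous_const (hf.add (continuous_const.mul hg))) hU_cover
    hU_mono.directed_le
  exact ⟨n + 1, by positivity, hn⟩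

section Sesquilinear

variable {𝕜 E F : Type*} [RCLike 𝕜] [NormedAddCommGroup E] [NormedSpace 𝕜 E]
  [SeminormedAddCommGroup F] [NormedSpace 𝕜 F]

theorem re_apply_ofReal_smul_self (B : E →L[𝕜] E →SL[starRingEnd 𝕜] 𝕜) (r : ℝ) (v : E) :
    RCLike.re (B ((r : 𝕜) • v) ((r : 𝕜) • v)) = r ^ 2 * RCLike.re (B v v) := by
  rw [B.map_smul, smul_apply, (B v).map_smulₛₗ, RCLike.conj_ofReal, smul_eq_mul, smul_eq_mul,
    ← mul_assoc, ← RCLike.ofReal_mul, RCLike.re_ofReal_mul, sq]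

theorem le_re_apply_self_of_forall_norm_eq_one (B : E →L[𝕜] E →SL[starRingEnd 𝕜] 𝕜)
    (A : E →L[𝕜] F) {δ C : ℝ} (h : ∀ u, ‖u‖ = 1 → -δ - C * ‖A u‖ ^ 2 ≤ RCLike.re (B u u))
    (v : E) : -δ * ‖v‖ ^ 2 - C * ‖A v‖ ^ 2 ≤ RCLike.re (B v v) := by
  rcases eq_or_ne v 0 with rfl | hv
  · simp
  have hv_norm : ‖v‖ ≠ 0 := norm_ne_zero_iff.2 hv
  set u : E := (‖v‖⁻¹ : 𝕜) • v
  have hvu : v = (‖v‖ : 𝕜) • u := by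
    rw [smul_smul, ← RCLike.ofReal_inv, ← RCLike.ofReal_mul, mul_inv_cancel₀ hv_norm,
      RCLike.ofReal_one, one_smul]
  have hAv : ‖A v‖ = ‖v‖ * ‖A u‖ := by
    conv_lhs => rw [hvu]
    rw [map_smul, norm_smul, RCLike.norm_ofReal, abs_norm]
  calc -δ * ‖v‖ ^ 2 - C * ‖A v‖ ^ 2 = ‖v‖ ^ 2 * (-δ - C * ‖A u‖ ^ 2) := by rw [hAv]; ring
    _ ≤ ‖v‖ ^ 2 * RCLike.re (B u u) := by
      gcongr
      exact h u (norm_smul_inv_norm hv)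
    _ = RCLike.re (B v v) := by conv_rhs => rw [hvu, re_apply_ofReal_smul_self]

end Sesquilinear

variable {I J : ℕ}

theorem uniform_quadratic_lower_bound_general
    (K : Type*) [TopologicalSpace K] [CompactSpace K]
    (σ : K → (EuclideanSpace ℂ (Fin J) →L[ℂ] EuclideanSpace ℂ (Fin I)))
    (hσ : Continuous σ)
    (q : K → (EuclideanSpace ℂ (Fin J) →L[ℂ]
      (EuclideanSpace ℂ (Fin J) →SL[starRingEnd ℂ] ℂ)))
    (hq : Continuous q)
    (hpos : ∀ k : K, ∀ v : EuclideanSpace ℂ (Fin J), σ k v = 0 → 0 ≤ (q k v v).re) :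
    ∀ δ : ℝ, 0 < δ → ∃ C : ℝ, 0 < C ∧ ∀ k : K, ∀ v : EuclideanSpace ℂ (Fin J),
      -δ * ‖v‖ ^ 2 - C * ‖σ k v‖ ^ 2 ≤ (q k v v).re := by
  intro δ hδ
  let E := EuclideanSpace ℂ (Fin J)
  have hq_cont : Continuous fun p : K × E ↦ (q p.1 p.2 p.2).re + δ :=
    (Complex.continuous_re.comp (((hq.comp continuous_fst).clm_apply
      continuous_snd).semilinear_clm_apply continuous_snd)).add continuous_const
  have hσ_cont : Continuous fun p : K × E ↦ ‖σ p.1 p.2‖ ^ 2 :=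
    ((hσ.comp continuous_fst).clm_apply continuous_snd).norm.pow 2
  have hpos_δ : ∀ p ∈ (Set.univ : Set K) ×ˢ Metric.sphere (0 : E) 1,
      ‖σ p.1 p.2‖ ^ 2 = 0 → 0 < (q p.1 p.2 p.2).re + δ := by
    rintro ⟨k, u⟩ - hσu
    linarith [hpos k u (by simpa using hσu)]
  obtain ⟨C, hC, hC_pos⟩ :=
    (isCompact_univ.prod (isCompact_sphere 0 1)).exists_pos_forall_pos_add_mul hq_cont hσ_cont
      (fun _ ↦ by positivity) hpos_δ
  refine ⟨C, hC, fun k v ↦ le_re_apply_self_of_forall_norm_eq_one (q k) (σ k) (fun u hu ↦ ?_) v⟩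
  have := hC_pos (k, u) ⟨trivial, mem_sphere_zero_iff_norm.2 hu⟩
  rw [RCLike.re_to_complex]
  linarith

/-- **Uniform lower bound for quadratic forms over a compact family of linear
constraints.** Let `K` be a nonempty compact topological space, `σ : K → Hom(ℂᴶ, ℂᴵ)`
continuous, and `q : K → (sesquilinear forms on ℂᴶ)` continuous (forms linear in the
first argument, conjugate-linear in the second). If `Re q(k)(v,v) ≥ 0` whenever
`σ(k)v = 0`, then for every `δ > 0` there is `C > 0` with
`Re q(k)(v,v) ≥ -δ|v|² - C|σ(k)v|²` for all `k` and `v`. -/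
theorem uniform_quadratic_lower_bound
    (K : Type*) [TopologicalSpace K] [CompactSpace K] [Nonempty K]
    (σ : K → (EuclideanSpace ℂ (Fin J) →L[ℂ] EuclideanSpace ℂ (Fin I)))
    (hσ : Continuous σ)
    (q : K → (EuclideanSpace ℂ (Fin J) →L[ℂ]
      (EuclideanSpace ℂ (Fin J) →SL[starRingEnd ℂ] ℂ)))
    (hq : Continuous q)
    (hpos : ∀ k : K, ∀ v : EuclideanSpace ℂ (Fin J), σ k v = 0 → 0 ≤ (q k v v).re) :
    ∀ δ : ℝ, 0 < δ → ∃ C : ℝ, 0 < C ∧ ∀ k : K, ∀ v : EuclideanSpace ℂ (Fin J),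
      -δ * ‖v‖ ^ 2 - C * ‖σ k v‖ ^ 2 ≤ (q k v v).re :=
  uniform_quadratic_lower_bound_general K σ hσ q hq hpos
end

section
/- Quadratic inequality for homogeneous symbols (Euclidean form of the key lemma): Let K₀ ⊂ ℝⁿ be a nonempty compact set, let s > 0, and let σ : K₀ × (ℝⁿ∖{0}) → ℂ^{I×J} be continuous and positively homogeneous of degree s in the second variable (σ(x,tξ) = t^s σ(x,ξ) for t > 0). Let Q : K₀ → (sesquilinear forms on ℂ^J) be continuous, and set Λ(x) := { v ∈ ℂ^J : σ(x,ξ)v = 0 for some ξ ∈ ℝⁿ∖{0} }. Assume Re Q_x(v,v) ≥ 0 for every x ∈ K₀ and every v ∈ Λ(x). Then for every δ > 0 there exists C > 0 such that for all x ∈ K₀, all ξ ∈ ℝⁿ with |ξ| ≥ 1, and all v ∈ ℂ^J: Re Q_x(v,v) ≥ −δ |v|² − C (1+|ξ|²)^{-s} |σ(x,ξ)v|². -/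
/-! On the compact set `K₀ × S^{n-1} × S^{J-1}` the continuous function `Re Q_x(w,w)` can drop
below `-δ` only where `|σ(x,η)w|²` is bounded away from zero, since `Re Q_x(w,w) ≥ 0` wherever
`σ(x,η)w = 0`; hence `Re Q_x(w,w) ≥ -δ - C₀|σ(x,η)w|²` there. Both sides are quadratic in `w`,
so the bound holds for all `w`. Homogeneity gives `|σ(x,ξ)v| = |ξ|^s |σ(x,ξ/|ξ|)v|`, and
`|ξ|^{2s} ≥ 2^{-s}(1+|ξ|²)^s` for `|ξ| ≥ 1`, so `C = 2^s C₀` works. -/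

noncomputable section

variable {n I J : ℕ}

/-- Application of a matrix `A ∈ ℂ^{I×J}` to a vector `v ∈ ℂᴶ`, valued in Hermitian `ℂᴵ`. -/
def matVec (A : Fin I → Fin J → ℂ) (v : EuclideanSpace ℂ (Fin J)) : EuclideanSpace ℂ (Fin I) :=
  (WithLp.equiv 2 (Fin I → ℂ)).symm fun i => ∑ j, A i j * v j

open Filter Topology Set

instance ContinuousLinearMap.instContinuousEval {𝕜 𝕜₂ E F : Type*} [NontriviallyNormedField 𝕜]
    [NontriviallyNormedField 𝕜₂] [SeminormedAddCommGroup E] [SeminormedAddCommGroup F]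
    [NormedSpace 𝕜 E] [NormedSpace 𝕜₂ F] {σ : 𝕜 →+* 𝕜₂} [RingHomIsometric σ] :
    ContinuousEval (E →SL[σ] F) E F where
  continuous_eval := by
    refine continuous_iff_continuousAt.2 fun ⟨B₀, w₀⟩ => ?_
    have hsmall : Tendsto (fun p : (E →SL[σ] F) × E => (p.1 - B₀) p.2) (𝓝 (B₀, w₀)) (𝓝 0) := by
      refine squeeze_zero_norm (fun p => (p.1 - B₀).le_opNorm p.2) ?_
      exact ((continuous_fst.sub continuous_const).norm.mul continuous_snd.norm).tendsto' _ _
        (by simp)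
    simpa [ContinuousAt] using hsmall.add ((B₀.continuous.comp continuous_snd).tendsto (B₀, w₀))

theorem IsCompact.exists_pos_forall_sub_mul_le {X : Type*} [TopologicalSpace X] {T : Set X}
    (hT : IsCompact T) {f g : X → ℝ} (hf : ContinuousOn f T) (hg : ContinuousOn g T)
    (hg₀ : ∀ p ∈ T, 0 ≤ g p) {a : ℝ} (hfg : ∀ p ∈ T, g p = 0 → a < f p) :
    ∃ C > 0, ∀ p ∈ T, a - C * g p ≤ f p := by
  -- `g` is bounded below by some `ε > 0` on the compact sublevel set `T ∩ {f ≤ a}`.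
  obtain ⟨ε, hε, hεg⟩ :=
    (hf.lowerSemicontinuousOn.isCompact_inter_preimage_Iic hT a).exists_forall_le'
    (hg.mono inter_subset_left) (a := 0)
    fun p ⟨hp, hfp⟩ => (hg₀ p hp).lt_of_ne' fun h => (hfg p hp h).not_ge hfp
  obtain ⟨M, hM⟩ := hT.bddBelow_image hf
  refine ⟨(|M| + |a| + 1) / ε, by positivity, fun p hp => ?_⟩
  have hCg : 0 ≤ (|M| + |a| + 1) / ε * g p := by have := hg₀ p hp; positivity
  by_cases hfp : f p ≤ a
  · have hbig : |M| + |a| + 1 ≤ (|M| + |a| + 1) / ε * g p := by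
      rw [div_mul_eq_mul_div, le_div_iff₀ hε]
      exact mul_le_mul_of_nonneg_left (hεg p ⟨hp, hfp⟩) (by positivity)
    have hMf : M ≤ f p := hM ⟨p, hp, rfl⟩
    linarith [neg_abs_le M, le_abs_self a]
  · linarith

theorem le_of_forall_norm_eq_one_le {𝕜 E : Type*} [RCLike 𝕜] [NormedAddCommGroup E]
    [NormedSpace 𝕜 E] {F G : E → ℝ} (hF : ∀ (c : 𝕜) v, F (c • v) = ‖c‖ ^ 2 * F v)
    (hG : ∀ (c : 𝕜) v, G (c • v) = ‖c‖ ^ 2 * G v) (h : ∀ w, ‖w‖ = 1 → G w ≤ F w) (v : E) :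
    G v ≤ F v := by
  rcases eq_or_ne v 0 with rfl | hv
  · have hF₀ := hF 0 0
    have hG₀ := hG 0 0
    simp only [zero_smul, norm_zero, ne_eq, OfNat.ofNat_ne_zero, not_false_eq_true, zero_pow,
      zero_mul] at hF₀ hG₀
    rw [hF₀, hG₀]
  · have hv' : v = (‖v‖ : 𝕜) • (‖v‖⁻¹ : 𝕜) • v := by
      rw [smul_smul, mul_inv_cancel₀ (by simpa using hv), one_smul]
    rw [hv', hF, hG]
    exact mul_le_mul_of_nonneg_left (h _ (norm_smul_inv_norm hv)) (sq_nonneg _)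

theorem ContinuousLinearMap.re_apply_smul_smul {𝕜 E : Type*} [RCLike 𝕜] [NormedAddCommGroup E]
    [NormedSpace 𝕜 E] (B : E →L[𝕜] E →SL[starRingEnd 𝕜] 𝕜) (c : 𝕜) (v : E) :
    RCLike.re (B (c • v) (c • v)) = ‖c‖ ^ 2 * RCLike.re (B v v) := by
  simp only [map_smul, ContinuousLinearMap.map_smulₛₗ, FunLike.coe_smul,
    Pi.smul_apply, smul_eq_mul]
  rw [← mul_assoc, RCLike.conj_mul, ← RCLike.ofReal_pow, RCLike.re_ofReal_mul]

theorem one_add_sq_rpow_le_two_rpow_mul {t s : ℝ} (ht : 1 ≤ t) (hs : 0 ≤ s) :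
    (1 + t ^ 2) ^ s ≤ 2 ^ s * (t ^ s) ^ 2 := by
  have ht₀ : 0 ≤ t := by linarith
  calc (1 + t ^ 2) ^ s ≤ (2 * t ^ 2) ^ s := by gcongr; nlinarith
    _ = 2 ^ s * (t ^ s) ^ 2 := by
      rw [Real.mul_rpow (by norm_num) (by positivity), ← Real.rpow_pow_comm ht₀]

theorem matVec_smul (A : Fin I → Fin J → ℂ) (c : ℂ) (v : EuclideanSpace ℂ (Fin J)) :
    matVec A (c • v) = c • matVec A v := by
  ext i
  simp only [matVec, WithLp.equiv_symm_apply, PiLp.toLp_apply, PiLp.smul_apply, smul_eq_mul,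
    Finset.mul_sum, mul_left_comm]

theorem matVec_smul_left (c : ℂ) (A : Fin I → Fin J → ℂ) (v : EuclideanSpace ℂ (Fin J)) :
    matVec (c • A) v = c • matVec A v := by
  ext i
  simp only [matVec, WithLp.equiv_symm_apply, PiLp.toLp_apply, PiLp.smul_apply, Pi.smul_apply,
    smul_eq_mul, Finset.mul_sum, mul_assoc]

theorem continuous_matVec :
    Continuous fun q : (Fin I → Fin J → ℂ) × EuclideanSpace ℂ (Fin J) => matVec q.1 q.2 := by
  simp only [matVec, WithLp.equiv_symm_apply]
  fun_prop

theorem norm_matVec_sq_of_homogeneous {E : Type*} [NormedAddCommGroup E] [NormedSpace ℝ E]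
    {s : ℝ} {A : E → Fin I → Fin J → ℂ}
    (hA : ∀ t : ℝ, 0 < t → ∀ ξ : E, ξ ≠ 0 → ∀ i j, A (t • ξ) i j = ((t ^ s : ℝ) : ℂ) * A ξ i j)
    {ξ : E} (hξ : ξ ≠ 0) (v : EuclideanSpace ℂ (Fin J)) :
    ‖matVec (A ξ) v‖ ^ 2 = (‖ξ‖ ^ s) ^ 2 * ‖matVec (A (‖ξ‖⁻¹ • ξ)) v‖ ^ 2 := by
  have hnorm : 0 < ‖ξ‖ := norm_pos_iff.2 hξ
  have hscale : A ξ = ((‖ξ‖ ^ s : ℝ) : ℂ) • A (‖ξ‖⁻¹ • ξ) := by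
    funext i j
    conv_lhs => rw [← smul_inv_smul₀ hnorm.ne' ξ]
    exact hA _ hnorm _ (smul_ne_zero (inv_ne_zero hnorm.ne') hξ) i j
  rw [hscale, matVec_smul_left, norm_smul, Complex.norm_real,
    Real.norm_of_nonneg (by positivity), mul_pow]

theorem exists_pos_symbol_bound_of_norm_eq_one {K₀ : Set (EuclideanSpace ℝ (Fin n))}
    (hK₀ : IsCompact K₀)
    {σ : EuclideanSpace ℝ (Fin n) → EuclideanSpace ℝ (Fin n) → Fin I → Fin J → ℂ}
    (hσcont : ContinuousOn (fun p : EuclideanSpace ℝ (Fin n) × EuclideanSpace ℝ (Fin n) =>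
      σ p.1 p.2) (K₀ ×ˢ {ξ | ξ ≠ 0}))
    {Q : EuclideanSpace ℝ (Fin n) → (EuclideanSpace ℂ (Fin J) →L[ℂ]
      (EuclideanSpace ℂ (Fin J) →SL[starRingEnd ℂ] ℂ))}
    (hQcont : ContinuousOn Q K₀)
    (hQpos : ∀ x ∈ K₀, ∀ v : EuclideanSpace ℂ (Fin J),
      (∃ ξ : EuclideanSpace ℝ (Fin n), ξ ≠ 0 ∧ matVec (σ x ξ) v = 0) → 0 ≤ (Q x v v).re)
    {δ : ℝ} (hδ : 0 < δ) :
    ∃ C₀ > 0, ∀ x ∈ K₀, ∀ η : EuclideanSpace ℝ (Fin n), ‖η‖ = 1 →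
      ∀ v : EuclideanSpace ℂ (Fin J),
        -δ * ‖v‖ ^ 2 - C₀ * ‖matVec (σ x η) v‖ ^ 2 ≤ (Q x v v).re := by
  set T := K₀ ×ˢ (Metric.sphere (0 : EuclideanSpace ℝ (Fin n)) 1 ×ˢ
    Metric.sphere (0 : EuclideanSpace ℂ (Fin J)) 1)
  have hsphere : ∀ p ∈ T, p.2.1 ≠ 0 := by
    intro p hp h
    simpa [h] using hp.2.1
  have hQT : ContinuousOn (fun p => (Q p.1 p.2.2 p.2.2).re) T :=
    Complex.continuous_re.comp_continuousOn <|
      ((hQcont.comp continuousOn_fst fun p hp => hp.1).eval continuousOn_snd.snd).eval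
        continuousOn_snd.snd
  have hσT : ContinuousOn (fun p => ‖matVec (σ p.1 p.2.1) p.2.2‖ ^ 2) T :=
    (continuous_matVec.comp_continuousOn <| (hσcont.comp
      (continuousOn_fst.prodMk continuousOn_snd.fst) fun p hp => ⟨hp.1, hsphere p hp⟩).prodMk
        continuousOn_snd.snd).norm.pow 2
  have hΛ : ∀ p ∈ T, ‖matVec (σ p.1 p.2.1) p.2.2‖ ^ 2 = 0 → -δ < (Q p.1 p.2.2 p.2.2).re :=
    fun p hp h => (neg_neg_of_pos hδ).trans_le <|
      hQpos p.1 hp.1 p.2.2 ⟨p.2.1, hsphere p hp, by simpa using h⟩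
  obtain ⟨C₀, hC₀, hT⟩ := (hK₀.prod ((isCompact_sphere 0 1).prod (isCompact_sphere 0 1))
    ).exists_pos_forall_sub_mul_le hQT hσT (fun _ _ => sq_nonneg _) hΛ
  refine ⟨C₀, hC₀, fun x hx η hη => le_of_forall_norm_eq_one_le (𝕜 := ℂ)
    (F := fun w => (Q x w w).re) (G := fun w => -δ * ‖w‖ ^ 2 - C₀ * ‖matVec (σ x η) w‖ ^ 2)
    (fun c w => (Q x).re_apply_smul_smul c w) (fun c w => ?_) (fun w hw => ?_)⟩
  · simp only [norm_smul, matVec_smul]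
    ring
  · simpa [hw] using hT (x, η, w) ⟨hx, by simpa using hη, by simpa using hw⟩

theorem quadratic_inequality_homogeneous_symbol_general
    (s : ℝ) (hs : 0 < s)
    (K₀ : Set (EuclideanSpace ℝ (Fin n))) (hK₀ : IsCompact K₀)
    (σ : EuclideanSpace ℝ (Fin n) → EuclideanSpace ℝ (Fin n) → Fin I → Fin J → ℂ)
    (hσcont : ContinuousOn (fun p : EuclideanSpace ℝ (Fin n) × EuclideanSpace ℝ (Fin n) =>
      σ p.1 p.2) (K₀ ×ˢ {ξ | ξ ≠ 0}))
    (hσhom : ∀ x ∈ K₀, ∀ t : ℝ, 0 < t → ∀ ξ : EuclideanSpace ℝ (Fin n), ξ ≠ 0 →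
      ∀ i j, σ x (t • ξ) i j = ((t ^ s : ℝ) : ℂ) * σ x ξ i j)
    (Q : EuclideanSpace ℝ (Fin n) → (EuclideanSpace ℂ (Fin J) →L[ℂ]
      (EuclideanSpace ℂ (Fin J) →SL[starRingEnd ℂ] ℂ)))
    (hQcont : ContinuousOn Q K₀)
    (hQpos : ∀ x ∈ K₀, ∀ v : EuclideanSpace ℂ (Fin J),
      (∃ ξ : EuclideanSpace ℝ (Fin n), ξ ≠ 0 ∧ matVec (σ x ξ) v = 0) → 0 ≤ (Q x v v).re) :
    ∀ δ : ℝ, 0 < δ → ∃ C : ℝ, 0 < C ∧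
      ∀ x ∈ K₀, ∀ ξ : EuclideanSpace ℝ (Fin n), 1 ≤ ‖ξ‖ →
        ∀ v : EuclideanSpace ℂ (Fin J),
          -δ * ‖v‖ ^ 2 - C * ((1 + ‖ξ‖ ^ 2) ^ (-s)) * ‖matVec (σ x ξ) v‖ ^ 2
            ≤ (Q x v v).re := by
  intro δ hδ
  obtain ⟨C₀, hC₀, hunit⟩ := exists_pos_symbol_bound_of_norm_eq_one hK₀ hσcont hQcont hQpos hδ
  refine ⟨2 ^ s * C₀, by positivity, fun x hx ξ hξ v => ?_⟩
  have hξ₀ : ξ ≠ 0 := norm_pos_iff.1 (one_pos.trans_le hξ)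
  have hfactor : 1 ≤ 2 ^ s * (1 + ‖ξ‖ ^ 2) ^ (-s) * (‖ξ‖ ^ s) ^ 2 := by
    rw [Real.rpow_neg (by positivity), mul_right_comm, ← div_eq_mul_inv,
      one_le_div (by positivity)]
    exact one_add_sq_rpow_le_two_rpow_mul hξ hs.le
  set η := ‖ξ‖⁻¹ • ξ
  rw [norm_matVec_sq_of_homogeneous (hσhom x hx) hξ₀]
  calc _ ≤ -δ * ‖v‖ ^ 2 - C₀ * ‖matVec (σ x η) v‖ ^ 2 := by
        nlinarith [mul_le_mul_of_nonneg_left hfactor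
          (mul_nonneg hC₀.le (sq_nonneg ‖matVec (σ x η) v‖))]
    _ ≤ _ := hunit x hx η (by simpa using norm_smul_inv_norm (𝕜 := ℝ) hξ₀) v

/-- **Quadratic inequality for homogeneous symbols (Euclidean form of the key lemma).**
Let `K₀ ⊆ ℝⁿ` be nonempty compact, `σ : K₀ × (ℝⁿ∖{0}) → ℂ^{I×J}` continuous and
positively homogeneous of degree `s > 0` in `ξ`, and let `Q : K₀ → (sesquilinear forms
on ℂᴶ)` be continuous with `Re Q_x(v,v) ≥ 0` for all `x ∈ K₀` and all
`v ∈ Λ(x) = {v : σ(x,ξ)v = 0 for some ξ ≠ 0}`. Then for every `δ > 0` there is `C > 0`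
such that for all `x ∈ K₀`, `|ξ| ≥ 1` and `v ∈ ℂᴶ`:
`Re Q_x(v,v) ≥ -δ|v|² - C (1+|ξ|²)^{-s} |σ(x,ξ)v|²`. -/
theorem quadratic_inequality_homogeneous_symbol
    (s : ℝ) (hs : 0 < s)
    (K₀ : Set (EuclideanSpace ℝ (Fin n))) (hK₀ : IsCompact K₀) (hK₀ne : K₀.Nonempty)
    (σ : EuclideanSpace ℝ (Fin n) → EuclideanSpace ℝ (Fin n) → Fin I → Fin J → ℂ)
    (hσcont : ContinuousOn (fun p : EuclideanSpace ℝ (Fin n) × EuclideanSpace ℝ (Fin n) =>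
      σ p.1 p.2) (K₀ ×ˢ {ξ | ξ ≠ 0}))
    (hσhom : ∀ x ∈ K₀, ∀ t : ℝ, 0 < t → ∀ ξ : EuclideanSpace ℝ (Fin n), ξ ≠ 0 →
      ∀ i j, σ x (t • ξ) i j = ((t ^ s : ℝ) : ℂ) * σ x ξ i j)
    (Q : EuclideanSpace ℝ (Fin n) → (EuclideanSpace ℂ (Fin J) →L[ℂ]
      (EuclideanSpace ℂ (Fin J) →SL[starRingEnd ℂ] ℂ)))
    (hQcont : ContinuousOn Q K₀)
    (hQpos : ∀ x ∈ K₀, ∀ v : EuclideanSpace ℂ (Fin J),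
      (∃ ξ : EuclideanSpace ℝ (Fin n), ξ ≠ 0 ∧ matVec (σ x ξ) v = 0) → 0 ≤ (Q x v v).re) :
    ∀ δ : ℝ, 0 < δ → ∃ C : ℝ, 0 < C ∧
      ∀ x ∈ K₀, ∀ ξ : EuclideanSpace ℝ (Fin n), 1 ≤ ‖ξ‖ →
        ∀ v : EuclideanSpace ℂ (Fin J),
          -δ * ‖v‖ ^ 2 - C * ((1 + ‖ξ‖ ^ 2) ^ (-s)) * ‖matVec (σ x ξ) v‖ ^ 2
            ≤ (Q x v v).re :=
  quadratic_inequality_homogeneous_symbol_general s hs K₀ hK₀ σ hσcont hσhom Q hQcont hQpos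
end
end

section
/- Quadratic inequality for a single homogeneous symbol: Let s > 0 and let a : ℝⁿ∖{0} → ℂ^{I×J} be continuous and positively homogeneous of degree s (a(tξ) = t^s a(ξ) for t > 0). Let Q be a sesquilinear form on ℂ^J (linear in the first argument, conjugate-linear in the second) such that Re Q(v,v) ≥ 0 for every v in Λ_a := { v ∈ ℂ^J : a(ξ)v = 0 for some ξ ∈ ℝⁿ∖{0} }. Then for every δ > 0 there exists C > 0 such that for every ξ ∈ ℝⁿ∖{0} and every v ∈ ℂ^J: Re Q(v,v) ≥ −δ |v|² − C |ξ|^{-2s} |a(ξ)v|². -/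
noncomputable section

variable {n I J : ℕ}

lemma matVec_apply (A : Fin I → Fin J → ℂ) (v : EuclideanSpace ℂ (Fin J)) (i : Fin I) :
    matVec A v i = ∑ j, A i j * v j := rfl

lemma matVec_zero (A : Fin I → Fin J → ℂ) : matVec A (0 : EuclideanSpace ℂ (Fin J)) = 0 := by
  ext i; simp [matVec_apply]

lemma matVec_smulC (A : Fin I → Fin J → ℂ) (z : ℂ) (v : EuclideanSpace ℂ (Fin J)) :
    matVec A (z • v) = z • matVec A v := by
  ext i; simp [matVec_apply, Finset.mul_sum, mul_left_comm]

lemma matVec_congr_smul (A B : Fin I → Fin J → ℂ) (z : ℂ) (h : ∀ i j, A i j = z * B i j)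
    (v : EuclideanSpace ℂ (Fin J)) : matVec A v = z • matVec B v := by
  ext i; simp [matVec_apply, h, Finset.mul_sum, mul_assoc]

lemma real_smul_eq (c : ℝ) (w : EuclideanSpace ℂ (Fin J)) : c • w = ((c : ℂ)) • w := by
  rw [← algebraMap_smul ℂ c w]; norm_num

/-- Continuity of the quadratic form `v ↦ (Q v v).re`. -/
lemma quadform_continuous
    (Q : EuclideanSpace ℂ (Fin J) →ₗ[ℂ] (EuclideanSpace ℂ (Fin J) →ₗ⋆[ℂ] ℂ)) :
    Continuous fun v : EuclideanSpace ℂ (Fin J) => (Q v v).re := by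
  let T : EuclideanSpace ℂ (Fin J) →ₗ[ℝ] (EuclideanSpace ℂ (Fin J) →L[ℝ] ℂ) :=
    { toFun := fun v => LinearMap.toContinuousLinearMap
        { toFun := fun w => Q v w
          map_add' := fun w₁ w₂ => map_add (Q v) w₁ w₂
          map_smul' := fun c w => by
            simp only [real_smul_eq, map_smulₛₗ, Complex.conj_ofReal, smul_eq_mul,
              RingHom.id_apply, Complex.real_smul] }
      map_add' := fun v₁ v₂ => by
        ext w; simp [map_add]
      map_smul' := fun c v => by
        ext w
        simp only [real_smul_eq c v, map_smul, LinearMap.toContinuousLinearMap,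
          RingHom.id_apply]
        simp [Complex.real_smul] }
  have hT : Continuous T := T.continuous_of_finiteDimensional
  have h1 : Continuous fun v : EuclideanSpace ℂ (Fin J) => (T v) v :=
    isBoundedBilinearMap_apply.continuous.comp (hT.prodMk continuous_id)
  exact Complex.continuous_re.comp h1

/-- **Quadratic inequality for a single homogeneous symbol.** Let `a : ℝⁿ∖{0} → ℂ^{I×J}`
be continuous and positively homogeneous of degree `s > 0`, and let `Q` be a
sesquilinear form on `ℂᴶ` (linear in the first argument, conjugate-linear in the
second) with `Re Q(v,v) ≥ 0` on `Λ_a = {v : a(ξ)v = 0 for some ξ ≠ 0}`. Then for every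
`δ > 0` there is `C > 0` such that for all `ξ ≠ 0` and `v ∈ ℂᴶ`:
`Re Q(v,v) ≥ -δ|v|² - C|ξ|^{-2s}|a(ξ)v|²`. -/
theorem quadratic_inequality_single_symbol
    (s : ℝ) (hs : 0 < s)
    (a : EuclideanSpace ℝ (Fin n) → Fin I → Fin J → ℂ)
    (ha_cont : ContinuousOn a {ξ | ξ ≠ 0})
    (ha_hom : ∀ t : ℝ, 0 < t → ∀ ξ : EuclideanSpace ℝ (Fin n), ξ ≠ 0 →
      ∀ i j, a (t • ξ) i j = ((t ^ s : ℝ) : ℂ) * a ξ i j)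
    (Q : EuclideanSpace ℂ (Fin J) →ₗ[ℂ] (EuclideanSpace ℂ (Fin J) →ₗ⋆[ℂ] ℂ))
    (hQpos : ∀ v : EuclideanSpace ℂ (Fin J),
      (∃ ξ : EuclideanSpace ℝ (Fin n), ξ ≠ 0 ∧ matVec (a ξ) v = 0) → 0 ≤ (Q v v).re) :
    ∀ δ : ℝ, 0 < δ → ∃ C : ℝ, 0 < C ∧
      ∀ ξ : EuclideanSpace ℝ (Fin n), ξ ≠ 0 → ∀ v : EuclideanSpace ℂ (Fin J),
        -δ * ‖v‖ ^ 2 - C * (‖ξ‖ ^ (-(2 * s))) * ‖matVec (a ξ) v‖ ^ 2 ≤ (Q v v).re := by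
  intro δ hδ
  classical
  set K : Set (EuclideanSpace ℝ (Fin n) × EuclideanSpace ℂ (Fin J)) :=
    (Metric.sphere 0 1) ×ˢ (Metric.sphere 0 1) with hKdef
  have hKcomp : IsCompact K := (isCompact_sphere 0 1).prod (isCompact_sphere 0 1)
  have hKsub : K ⊆ {p | p.1 ≠ 0} := by
    rintro ⟨ξ, v⟩ ⟨h1, _⟩
    have : ‖ξ‖ = 1 := by simpa using h1
    simp only [Set.mem_setOf_eq]
    intro h0; rw [h0] at this; simp at this
  have hq : Continuous fun v : EuclideanSpace ℂ (Fin J) => (Q v v).re := quadform_continuous Q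
  -- continuity of the symbol applied map
  have hg : ContinuousOn
      (fun p : EuclideanSpace ℝ (Fin n) × EuclideanSpace ℂ (Fin J) =>
        ‖matVec (a p.1) p.2‖ ^ 2) {p | p.1 ≠ 0} := by
    have hmv : ContinuousOn
        (fun p : EuclideanSpace ℝ (Fin n) × EuclideanSpace ℂ (Fin J) =>
          matVec (a p.1) p.2) {p | p.1 ≠ 0} := by
      apply (PiLp.continuous_toLp 2 fun _ : Fin I => ℂ).comp_continuousOn
      apply continuousOn_pi.mpr
      intro i
      apply continuousOn_finset_sum
      intro j _
      have haa : ContinuousOn (fun p : EuclideanSpace ℝ (Fin n) × EuclideanSpace ℂ (Fin J) =>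
          a p.1 i j) {p | p.1 ≠ 0} :=
        ((continuous_apply j).comp (continuous_apply i)).comp_continuousOn
          (ha_cont.comp continuous_fst.continuousOn (fun p hp => hp))
      have hvv : Continuous (fun p : EuclideanSpace ℝ (Fin n) × EuclideanSpace ℂ (Fin J) =>
          p.2 j) :=
        ((continuous_apply j).comp (PiLp.continuous_ofLp 2 _)).comp continuous_snd
      exact haa.mul hvv.continuousOn
    exact (continuous_norm.comp_continuousOn hmv).pow 2
  -- key inequality on the product of spheres
  have key : ∃ C : ℝ, 0 < C ∧ ∀ p ∈ K,
      -δ - C * ‖matVec (a p.1) p.2‖ ^ 2 ≤ (Q p.2 p.2).re := by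
    by_cases hKne : K.Nonempty
    · obtain ⟨p₀, hp₀K, hp₀min⟩ := hKcomp.exists_isMinOn hKne
        ((hq.comp continuous_snd).continuousOn)
      set B : ℝ := (Q p₀.2 p₀.2).re with hB
      set Kbad : Set (EuclideanSpace ℝ (Fin n) × EuclideanSpace ℂ (Fin J)) :=
        K ∩ {p | (Q p.2 p.2).re ≤ -δ} with hKbad
      have hKbadcomp : IsCompact Kbad :=
        hKcomp.inter_right (isClosed_le (hq.comp continuous_snd) continuous_const)
      by_cases hbne : Kbad.Nonempty
      · obtain ⟨p₁, hp₁, hp₁min⟩ := hKbadcomp.exists_isMinOn hbne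
          (hg.mono (fun p hp => hKsub hp.1))
        set m : ℝ := ‖matVec (a p₁.1) p₁.2‖ ^ 2 with hm
        have hmpos : 0 < m := by
          rcases lt_or_eq_of_le (by positivity : (0:ℝ) ≤ m) with h | h
          · exact h
          · exfalso
            have hz : matVec (a p₁.1) p₁.2 = 0 := by
              have := h.symm
              rw [hm, pow_eq_zero_iff (by norm_num)] at this
              exact norm_eq_zero.mp this
            have hpos := hQpos p₁.2 ⟨p₁.1, hKsub hp₁.1, hz⟩
            have := hp₁.2
            simp only [Set.mem_setOf_eq] at this
            linarith
        refine ⟨max 1 ((|B| + 1) / m), lt_of_lt_of_le one_pos (le_max_left _ _), ?_⟩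
        intro p hpK
        by_cases hpb : (Q p.2 p.2).re ≤ -δ
        · have hpbad : p ∈ Kbad := ⟨hpK, hpb⟩
          have hgm : m ≤ ‖matVec (a p.1) p.2‖ ^ 2 := hp₁min hpbad
          have hBp : B ≤ (Q p.2 p.2).re := hp₀min hpK
          have hC1 : ((|B| + 1) / m) ≤ max 1 ((|B| + 1) / m) := le_max_right _ _
          have h2 : (|B| + 1) ≤ max 1 ((|B| + 1) / m) * ‖matVec (a p.1) p.2‖ ^ 2 := by
            calc (|B| + 1) = ((|B| + 1) / m) * m := by field_simp
            _ ≤ max 1 ((|B| + 1) / m) * ‖matVec (a p.1) p.2‖ ^ 2 := by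
                apply mul_le_mul hC1 hgm hmpos.le (le_trans one_pos.le (le_max_left _ _))
          have hBabs : -|B| ≤ B := neg_abs_le B
          nlinarith
        · push_neg at hpb
          have : (0:ℝ) ≤ max 1 ((|B| + 1) / m) * ‖matVec (a p.1) p.2‖ ^ 2 := by positivity
          linarith
      · refine ⟨1, one_pos, ?_⟩
        intro p hpK
        have : ¬ ((Q p.2 p.2).re ≤ -δ) := fun h => hbne ⟨p, hpK, h⟩
        push_neg at this
        have h0 : (0:ℝ) ≤ 1 * ‖matVec (a p.1) p.2‖ ^ 2 := by positivity
        linarith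
    · refine ⟨1, one_pos, ?_⟩
      intro p hpK
      exact absurd ⟨p, hpK⟩ hKne
  obtain ⟨C, hC, hCkey⟩ := key
  refine ⟨C, hC, ?_⟩
  intro ξ hξ v
  by_cases hv : v = 0
  · subst hv
    simp [matVec_zero]
  · -- normalize
    set r : ℝ := ‖ξ‖ with hr
    have hrpos : 0 < r := norm_pos_iff.mpr hξ
    set c : ℝ := ‖v‖ with hc
    have hcpos : 0 < c := norm_pos_iff.mpr hv
    set ξh : EuclideanSpace ℝ (Fin n) := r⁻¹ • ξ with hξh
    set vh : EuclideanSpace ℂ (Fin J) := c⁻¹ • v with hvh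
    have hξhs : ξh ∈ Metric.sphere (0 : EuclideanSpace ℝ (Fin n)) 1 := by
      have : ‖ξh‖ = 1 := by
        rw [hξh, norm_smul, Real.norm_eq_abs, abs_inv, abs_of_pos hrpos, ← hr,
          inv_mul_cancel₀ hrpos.ne']
      exact mem_sphere_zero_iff_norm.mpr this
    have hvhs : vh ∈ Metric.sphere (0 : EuclideanSpace ℂ (Fin J)) 1 := by
      have : ‖vh‖ = 1 := by
        rw [hvh, norm_smul, Real.norm_eq_abs, abs_inv, abs_of_pos hcpos, ← hc,
          inv_mul_cancel₀ hcpos.ne']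
      exact mem_sphere_zero_iff_norm.mpr this
    have hξhne : ξh ≠ 0 := by
      intro h0
      have : ‖ξh‖ = 1 := by simpa using hξhs
      rw [h0] at this; simp at this
    have hKmem : (ξh, vh) ∈ K := ⟨hξhs, hvhs⟩
    have hsphere := hCkey (ξh, vh) hKmem
    -- reconstruct ξ and v
    have hξeq : r • ξh = ξ := by
      rw [hξh, smul_smul, mul_inv_cancel₀ hrpos.ne', one_smul]
    have hveq : v = (c : ℂ) • vh := by
      rw [hvh, ← real_smul_eq, smul_smul, mul_inv_cancel₀ hcpos.ne', one_smul]
    -- homogeneity relation for a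
    have haξ : ∀ i j, a ξ i j = ((r ^ s : ℝ) : ℂ) * a ξh i j := by
      intro i j
      have := ha_hom r hrpos ξh hξhne i j
      rwa [hξeq] at this
    -- norm identity
    have hmv : matVec (a ξ) v = (((r ^ s * c : ℝ)) : ℂ) • matVec (a ξh) vh := by
      rw [matVec_congr_smul (a ξ) (a ξh) _ haξ v, hveq, matVec_smulC]
      rw [smul_smul]
      push_cast
      ring_nf
    have hnorm : ‖matVec (a ξ) v‖ = (r ^ s * c) * ‖matVec (a ξh) vh‖ := by
      rw [hmv, norm_smul]
      have : ‖(((r ^ s * c : ℝ)) : ℂ)‖ = r ^ s * c := by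
        rw [Complex.norm_real, Real.norm_eq_abs, abs_of_pos (by positivity)]
      rw [this]
    -- quadratic form scaling
    have hQsc : (Q v v).re = c ^ 2 * (Q vh vh).re := by
      have h1 : Q ((c : ℂ) • vh) = (c : ℂ) • Q vh := map_smul Q _ _
      have h2 : (Q vh) ((c : ℂ) • vh) = (starRingEnd ℂ (c : ℂ)) • (Q vh) vh :=
        (Q vh).map_smulₛₗ _ _
      have : Q v v = ((c ^ 2 : ℝ) : ℂ) * Q vh vh := by
        rw [hveq, h1, LinearMap.smul_apply, h2, Complex.conj_ofReal, smul_eq_mul,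
          smul_eq_mul]
        push_cast
        ring
      rw [this]
      rw [Complex.re_ofReal_mul]
    -- rpow identity
    have hrp : r ^ (-(2 * s)) * (r ^ s) ^ 2 = 1 := by
      have h2 : (r ^ s) ^ 2 = r ^ (2 * s) := by
        rw [← Real.rpow_natCast (r ^ s) 2, ← Real.rpow_mul hrpos.le]
        norm_num [mul_comm]
      rw [h2, ← Real.rpow_add hrpos]
      simp
    -- conclude
    set N : ℝ := ‖matVec (a ξh) vh‖ with hN
    have hNnn : 0 ≤ N := norm_nonneg _
    rw [hQsc, hnorm]
    have hlhs : -δ * c ^ 2 - C * r ^ (-(2 * s)) * (r ^ s * c * N) ^ 2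
        = c ^ 2 * (-δ - C * N ^ 2) := by
      have : C * r ^ (-(2 * s)) * (r ^ s * c * N) ^ 2
          = C * (r ^ (-(2 * s)) * (r ^ s) ^ 2) * (c ^ 2 * N ^ 2) := by ring
      rw [this, hrp]
      ring
    rw [hlhs]
    exact mul_le_mul_of_nonneg_left hsphere (sq_nonneg c)
end
end
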